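/- Suppose the tableau for an input formula θ is built using the specific restrictive cut conditions (C1) and (C2). If Δ →^{¬D_A φ} Δ' is an arrow of the final tableau T^θ and D_B ψ ∈ Δ' for some nonempty B ⊆ A, then D_B ψ ∈ Δ. -/
import Mathlib


set_option autoImplicit false

/-- A coalition is a nonempty finite set of agents. -/
abbrev Coalition (Agent : Type) : Type := {A : Finset Agent // A.Nonempty}

/-- Formulas of the logic CMAEL(CD). -/
inductive Formula (Agent AP : Type) : Type where
  | atom : AP → Formula Agent AP
  | neg  : Formula Agent AP → Formula Agent AP
  | conj : Formula Agent AP → Formula Agent AP → Formula Agent AP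
  | D    : Coalition Agent → Formula Agent AP → Formula Agent AP
  | C    : Coalition Agent → Formula Agent AP → Formula Agent AP

/-- The singleton coalition `{a}`. -/
def single {Agent : Type} (a : Agent) : Coalition Agent :=
  ⟨{a}, Finset.singleton_nonempty a⟩

/-- A coalitional multiagent epistemic pseudo-model (pseudo-CMAEM):
each `RD A` is an equivalence relation, and `RD A ⊆ RD B` whenever `B ⊆ A`. -/
structure PseudoCMAEM (Agent AP : Type) where
  State : Type
  nonempty : Nonempty State
  RD : Coalition Agent → State → State → Prop
  equiv : ∀ A, Equivalence (RD A)
  mono : ∀ (A B : Coalition Agent), B.1 ⊆ A.1 → ∀ s t, RD A s t → RD B s t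
  label : State → Set AP

namespace PseudoCMAEM

variable {Agent AP : Type}

/-- `RC A` is the reflexive-transitive closure of `⋃_{∅ ≠ B ⊆ A} RD B`. -/
def RC (M : PseudoCMAEM Agent AP) (A : Coalition Agent) : M.State → M.State → Prop :=
  Relation.ReflTransGen (fun s t => ∃ B : Coalition Agent, B.1 ⊆ A.1 ∧ M.RD B s t)

/-- Truth at a state (standard Kripke clauses). -/
def sat (M : PseudoCMAEM Agent AP) : M.State → Formula Agent AP → Prop
  | s, .atom p => p ∈ M.label s
  | s, .neg φ => ¬ sat M s φ
  | s, .conj φ ψ => sat M s φ ∧ sat M s ψ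
  | s, .D A φ => ∀ t, M.RD A s t → sat M t φ
  | s, .C A φ => ∀ t, M.RC A s t → sat M t φ

/-- `t` is `A`-reachable from `s`: `s = t` or a finite chain of single-agent `RD` steps
with agents from `A`. -/
def AReach (M : PseudoCMAEM Agent AP) (A : Coalition Agent) : M.State → M.State → Prop :=
  Relation.ReflTransGen (fun s t => ∃ a ∈ A.1, M.RD (single a) s t)

end PseudoCMAEM

/-- A coalitional multiagent epistemic model (CMAEM): additionally
`RD A = ⋂_{a ∈ A} RD {a}`. -/
structure CMAEM (Agent AP : Type) extends PseudoCMAEM Agent AP where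
  inter : ∀ (A : Coalition Agent) (s t : State), RD A s t ↔ ∀ a ∈ A.1, RD (single a) s t

namespace CMAEM

variable {Agent AP : Type}

abbrev sat (M : CMAEM Agent AP) : M.State → Formula Agent AP → Prop :=
  M.toPseudoCMAEM.sat

abbrev RC (M : CMAEM Agent AP) : Coalition Agent → M.State → M.State → Prop :=
  M.toPseudoCMAEM.RC

end CMAEM

/-- `AlphaComp χ ψ` : `ψ` is an α-component of the α-formula `χ`. -/
inductive AlphaComp {Agent AP : Type} : Formula Agent AP → Formula Agent AP → Prop where
  | negneg (φ : Formula Agent AP) : AlphaComp (.neg (.neg φ)) φ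
  | conjL (φ ψ : Formula Agent AP) : AlphaComp (.conj φ ψ) φ
  | conjR (φ ψ : Formula Agent AP) : AlphaComp (.conj φ ψ) ψ
  | dSelf (A : Coalition Agent) (φ : Formula Agent AP) : AlphaComp (.D A φ) (.D A φ)
  | dComp (A : Coalition Agent) (φ : Formula Agent AP) : AlphaComp (.D A φ) φ
  | cComp (A : Coalition Agent) (φ : Formula Agent AP) : AlphaComp (.C A φ) φ
  | cD (A : Coalition Agent) (φ : Formula Agent AP) {a : Agent} (ha : a ∈ A.1) :
      AlphaComp (.C A φ) (.D (single a) (.C A φ))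

/-- α-formulas: `¬¬φ`, `φ∧ψ`, `D_A φ`, `C_A φ`. -/
def IsAlpha {Agent AP : Type} : Formula Agent AP → Prop
  | .neg (.neg _) => True
  | .conj _ _ => True
  | .D _ _ => True
  | .C _ _ => True
  | _ => False

/-- `BetaComp χ ψ` : `ψ` is a β-component of the β-formula `χ`. -/
inductive BetaComp {Agent AP : Type} : Formula Agent AP → Formula Agent AP → Prop where
  | nconjL (φ ψ : Formula Agent AP) : BetaComp (.neg (.conj φ ψ)) (.neg φ)
  | nconjR (φ ψ : Formula Agent AP) : BetaComp (.neg (.conj φ ψ)) (.neg ψ)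
  | ncComp (A : Coalition Agent) (φ : Formula Agent AP) : BetaComp (.neg (.C A φ)) (.neg φ)
  | ncD (A : Coalition Agent) (φ : Formula Agent AP) {a : Agent} (ha : a ∈ A.1) :
      BetaComp (.neg (.C A φ)) (.neg (.D (single a) (.C A φ)))

/-- β-formulas: `¬(φ∧ψ)`, `¬C_A φ`. -/
def IsBeta {Agent AP : Type} : Formula Agent AP → Prop
  | .neg (.conj _ _) => True
  | .neg (.C _ _) => True
  | _ => False

section SetsOfFormulas

variable {Agent AP : Type}

/-- A set of formulas is patently inconsistent if it contains a pair `φ`, `¬φ`. -/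
def PatInc (Δ : Set (Formula Agent AP)) : Prop := ∃ φ, φ ∈ Δ ∧ Formula.neg φ ∈ Δ

/-- Fully expanded set of formulas. -/
def FullyExpandedSet (Δ : Set (Formula Agent AP)) : Prop :=
  ¬ PatInc Δ ∧
  (∀ χ ∈ Δ, ∀ ψ, AlphaComp χ ψ → ψ ∈ Δ) ∧
  (∀ χ ∈ Δ, IsBeta χ → ∃ ψ, BetaComp χ ψ ∧ ψ ∈ Δ)

/-- The subformulas of a formula. -/
def subf : Formula Agent AP → Set (Formula Agent AP)
  | .atom p => {Formula.atom p}
  | .neg φ => insert (Formula.neg φ) (subf φ)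
  | .conj φ ψ => insert (Formula.conj φ ψ) (subf φ ∪ subf ψ)
  | .D A φ => insert (Formula.D A φ) (subf φ)
  | .C A φ => insert (Formula.C A φ) (subf φ)

end SetsOfFormulas

section Expansion

variable {Agent AP : Type}

/-- One set-replacement step of the procedure `FullExpansion`, acting on a family of sets
of formulas; patently inconsistent sets are discarded immediately. -/
inductive FEStep : Set (Set (Formula Agent AP)) → Set (Set (Formula Agent AP)) → Prop where
  | alpha {F : Set (Set (Formula Agent AP))} {Φ : Set (Formula Agent AP)}
      {χ : Formula Agent AP} (hΦ : Φ ∈ F) (hχ : χ ∈ Φ) (hα : IsAlpha χ) :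
      FEStep F ((F \ {Φ}) ∪ {Δ | Δ = Φ ∪ {ψ | AlphaComp χ ψ} ∧ ¬ PatInc Δ})
  | beta {F : Set (Set (Formula Agent AP))} {Φ : Set (Formula Agent AP)}
      {χ : Formula Agent AP} (hΦ : Φ ∈ F) (hχ : χ ∈ Φ) (hβ : IsBeta χ)
      (hnone : ∀ ψ, BetaComp χ ψ → ψ ∉ Φ) :
      FEStep F ((F \ {Φ}) ∪ {Δ | (∃ ψ, BetaComp χ ψ ∧ Δ = insert ψ Φ) ∧ ¬ PatInc Δ})
  | ev {F : Set (Set (Formula Agent AP))} {Φ : Set (Formula Agent AP)}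
      {A : Coalition Agent} {φ : Formula Agent AP}
      (hΦ : Φ ∈ F) (hχ : Formula.neg (.C A φ) ∈ Φ) (hnφ : Formula.neg φ ∉ Φ)
      (hother : ∃ ψ, BetaComp (Formula.neg (.C A φ)) ψ ∧ ψ ≠ Formula.neg φ ∧ ψ ∈ Φ) :
      FEStep F (F ∪ {Δ | Δ = insert (Formula.neg φ) Φ ∧ ¬ PatInc Δ})

/-- The starting family of the expansion procedure: `{Γ}`, unless `Γ` is
patently inconsistent, in which case the empty family. -/
def feInit (Γ : Set (Formula Agent AP)) : Set (Set (Formula Agent AP)) :=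
  {Δ | Δ = Γ ∧ ¬ PatInc Γ}

/-- Type of restrictive cut conditions: a condition on the cut formula, the host formula
it is a subformula of, and the current set. -/
abbrev CutCond (Agent AP : Type) : Type :=
  Formula Agent AP → Formula Agent AP → Set (Formula Agent AP) → Prop

/-- One step of the cut-saturated-expansion procedure: a `FEStep`, or a cut on a
subformula `D_A φ` (resp. `C_A φ`) of a member formula, when `C1` (resp. `C2`) holds. -/
inductive CSEStep (C1 C2 : CutCond Agent AP) :
    Set (Set (Formula Agent AP)) → Set (Set (Formula Agent AP)) → Prop where
  | fe {F F' : Set (Set (Formula Agent AP))} : FEStep F F' → CSEStep C1 C2 F F'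
  | cutD {F : Set (Set (Formula Agent AP))} {Φ : Set (Formula Agent AP)}
      {ψ : Formula Agent AP} {A : Coalition Agent} {φ : Formula Agent AP}
      (hΦ : Φ ∈ F) (hψ : ψ ∈ Φ) (hsub : Formula.D A φ ∈ subf ψ)
      (hc : C1 (Formula.D A φ) ψ Φ) :
      CSEStep C1 C2 F ((F \ {Φ}) ∪
        {Δ | (Δ = insert (Formula.D A φ) Φ ∨ Δ = insert (Formula.neg (Formula.D A φ)) Φ) ∧
              ¬ PatInc Δ})
  | cutC {F : Set (Set (Formula Agent AP))} {Φ : Set (Formula Agent AP)}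
      {ψ : Formula Agent AP} {A : Coalition Agent} {φ : Formula Agent AP}
      (hΦ : Φ ∈ F) (hψ : ψ ∈ Φ) (hsub : Formula.C A φ ∈ subf ψ)
      (hc : C2 (Formula.C A φ) ψ Φ) :
      CSEStep C1 C2 F ((F \ {Φ}) ∪
        {Δ | (Δ = insert (Formula.C A φ) Φ ∨ Δ = insert (Formula.neg (Formula.C A φ)) Φ) ∧
              ¬ PatInc Δ})

/-- The cut-saturated expansions of `Γ`: members of a family reachable from `{Γ}` by
`CSEStep`s on which no `CSEStep` has any further effect (saturation). -/
def CSE (C1 C2 : CutCond Agent AP) (Γ : Set (Formula Agent AP)) :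
    Set (Set (Formula Agent AP)) :=
  {Δ | ∃ F, Relation.ReflTransGen (CSEStep C1 C2) (feInit Γ) F ∧
        (∀ F', CSEStep C1 C2 F F' → F' = F) ∧ Δ ∈ F}

end Expansion

section Hintikka

variable {Agent AP : Type}

/-- The relation `R^C_A` determined by a family of relations `RD`. -/
def RCof {State : Type} (RD : Coalition Agent → State → State → Prop)
    (A : Coalition Agent) : State → State → Prop :=
  Relation.ReflTransGen (fun s t => ∃ B : Coalition Agent, B.1 ⊆ A.1 ∧ RD B s t)

end Hintikka

/-- A coalitional multiagent epistemic Hintikka structure (CMAEHS). -/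
structure CMAEHS (Agent AP : Type) where
  State : Type
  nonempty : Nonempty State
  RD : Coalition Agent → State → State → Prop
  H : State → Set (Formula Agent AP)
  ch1 : ∀ s, FullyExpandedSet (H s)
  ch2 : ∀ s (A : Coalition Agent) (φ : Formula Agent AP),
      Formula.neg (.D A φ) ∈ H s → ∃ t, RD A s t ∧ Formula.neg φ ∈ H t
  ch3 : ∀ s s' (A : Coalition Agent), RD A s s' →
      ∀ (B : Coalition Agent), B.1 ⊆ A.1 →
      ∀ φ : Formula Agent AP, (Formula.D B φ ∈ H s ↔ Formula.D B φ ∈ H s')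
  ch4 : ∀ s (A : Coalition Agent) (φ : Formula Agent AP),
      Formula.neg (.C A φ) ∈ H s → ∃ t, RCof RD A s t ∧ Formula.neg φ ∈ H t

section Tableau

variable {Agent AP : Type}

/-- The prestate created by rule `DR` from a state `Δ` and a formula `¬D_A φ ∈ Δ`. -/
def DRset (A : Coalition Agent) (φ : Formula Agent AP) (Δ : Set (Formula Agent AP)) :
    Set (Formula Agent AP) :=
  ({Formula.neg φ} : Set (Formula Agent AP)) ∪
  {χ ∈ Δ | ∃ (A' : Coalition Agent) (ψ : Formula Agent AP),
      χ = Formula.D A' ψ ∧ A'.1 ⊆ A.1} ∪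
  {χ ∈ Δ | ∃ (A' : Coalition Agent) (ψ : Formula Agent AP),
      χ = Formula.neg (Formula.D A' ψ) ∧ A'.1 ⊆ A.1 ∧
      χ ≠ Formula.neg (Formula.D A φ)} ∪
  {χ ∈ Δ | ∃ (A' : Coalition Agent) (ψ : Formula Agent AP),
      χ = Formula.neg (Formula.C A' ψ) ∧ ∃ a, a ∈ A'.1 ∧ a ∈ A.1}

mutual
  /-- The prestates of the pretableau for input formula `θ`. -/
  inductive IsPrestate (C1 C2 : CutCond Agent AP) (θ : Formula Agent AP) :
      Set (Formula Agent AP) → Prop where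
    | init : IsPrestate C1 C2 θ {θ}
    | dr {Δ : Set (Formula Agent AP)} {A : Coalition Agent} {φ : Formula Agent AP} :
        IsState C1 C2 θ Δ → Formula.neg (.D A φ) ∈ Δ →
        IsPrestate C1 C2 θ (DRset A φ Δ)

  /-- The states of the pretableau for input formula `θ` (rule `SR`). -/
  inductive IsState (C1 C2 : CutCond Agent AP) (θ : Formula Agent AP) :
      Set (Formula Agent AP) → Prop where
    | sr {Γ Δ : Set (Formula Agent AP)} :
        IsPrestate C1 C2 θ Γ → Δ ∈ CSE C1 C2 Γ → IsState C1 C2 θ Δ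
end

/-- The arrow `Δ →^{¬D_A φ} Δ'` of the initial tableau `T_0^θ`
(obtained from `Δ →^{¬D_A φ} Γ ⇢ Δ'` by prestate elimination). -/
def InitArrow (C1 C2 : CutCond Agent AP) (θ : Formula Agent AP)
    (Δ : Set (Formula Agent AP)) (A : Coalition Agent) (φ : Formula Agent AP)
    (Δ' : Set (Formula Agent AP)) : Prop :=
  IsState C1 C2 θ Δ ∧ Formula.neg (.D A φ) ∈ Δ ∧ Δ' ∈ CSE C1 C2 (DRset A φ Δ)

/-- A path realizing the eventuality `¬C_A φ` at a state, within the set `S` of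
(surviving) states, all of whose nodes satisfy the predicate `P`. -/
inductive RealizePath (C1 C2 : CutCond Agent AP) (θ : Formula Agent AP)
    (S : Set (Set (Formula Agent AP))) (P : Set (Formula Agent AP) → Prop)
    (A : Coalition Agent) (φ : Formula Agent AP) : Set (Formula Agent AP) → Prop where
  | base {Δ : Set (Formula Agent AP)} (hS : Δ ∈ S) (hP : P Δ)
      (h : Formula.neg φ ∈ Δ) : RealizePath C1 C2 θ S P A φ Δ
  | step {Δ Δ' : Set (Formula Agent AP)} (hS : Δ ∈ S) (hP : P Δ)
      (hev : Formula.neg (.C A φ) ∈ Δ) {a : Agent} (ha : a ∈ A.1)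
      {ψ : Formula Agent AP} (harr : InitArrow C1 C2 θ Δ (single a) ψ Δ')
      (h : RealizePath C1 C2 θ S P A φ Δ') : RealizePath C1 C2 θ S P A φ Δ

/-- One state-elimination step (rule `E1` or rule `E2`). -/
inductive ElimStep (C1 C2 : CutCond Agent AP) (θ : Formula Agent AP) :
    Set (Set (Formula Agent AP)) → Set (Set (Formula Agent AP)) → Prop where
  | e1 {S : Set (Set (Formula Agent AP))} {Δ : Set (Formula Agent AP)}
      {A : Coalition Agent} {φ : Formula Agent AP}
      (hΔ : Δ ∈ S) (hin : Formula.neg (.D A φ) ∈ Δ)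
      (hno : ∀ Δ' ∈ S, ¬ InitArrow C1 C2 θ Δ A φ Δ') :
      ElimStep C1 C2 θ S (S \ {Δ})
  | e2 {S : Set (Set (Formula Agent AP))} {Δ : Set (Formula Agent AP)}
      {A : Coalition Agent} {φ : Formula Agent AP}
      (hΔ : Δ ∈ S) (hin : Formula.neg (.C A φ) ∈ Δ)
      (hno : ¬ RealizePath C1 C2 θ S (fun _ => True) A φ Δ) :
      ElimStep C1 C2 θ S (S \ {Δ})

/-- `S` is the set of states of the final tableau `T^θ`: obtained from the states of the
initial tableau `T_0^θ` by state-elimination steps, with no further step applicable. -/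
def FinalTableau (C1 C2 : CutCond Agent AP) (θ : Formula Agent AP)
    (S : Set (Set (Formula Agent AP))) : Prop :=
  Relation.ReflTransGen (ElimStep C1 C2 θ) {Δ | IsState C1 C2 θ Δ} S ∧
  ∀ S', ¬ ElimStep C1 C2 θ S S'

/-- A set of formulas satisfiable (at a single state) in some CMAEM. -/
def SatSet (Δ : Set (Formula Agent AP)) : Prop :=
  ∃ (M : CMAEM Agent AP) (s : M.State), ∀ χ ∈ Δ, M.sat s χ

/-- The specific restrictive condition (C1) for cuts on `D_A φ`. -/
def specC1 : CutCond Agent AP := fun χ ψ Δ =>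
  ∃ (A : Coalition Agent) (φ : Formula Agent AP), χ = Formula.D A φ ∧
    ((∃ (B : Coalition Agent) (δ : Formula Agent AP),
        (ψ = Formula.D B δ ∨ ψ = Formula.neg (Formula.D B δ)) ∧
        ∃ (E : Coalition Agent) (ε : Formula Agent AP),
          Formula.neg (Formula.D E ε) ∈ Δ ∧ A.1 ⊆ E.1 ∧ B.1 ⊆ E.1) ∨
     (∃ (B : Coalition Agent) (δ : Formula Agent AP),
        ψ = Formula.neg (Formula.C B δ) ∧
        ∃ (E : Coalition Agent) (ε : Formula Agent AP),
          Formula.neg (Formula.D E ε) ∈ Δ ∧ A.1 ⊆ E.1 ∧ ∃ a, a ∈ B.1 ∧ a ∈ E.1))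

/-- The specific restrictive condition (C2) for cuts on `C_A φ`. -/
def specC2 : CutCond Agent AP := fun χ ψ Δ =>
  ∃ (A : Coalition Agent) (φ : Formula Agent AP), χ = Formula.C A φ ∧
    ((∃ (B : Coalition Agent) (δ : Formula Agent AP),
        (ψ = Formula.D B δ ∨ ψ = Formula.neg (Formula.D B δ)) ∧
        ∃ (E : Coalition Agent) (ε : Formula Agent AP),
          Formula.neg (Formula.D E ε) ∈ Δ ∧ B.1 ⊆ E.1 ∧ ∃ a, a ∈ A.1 ∧ a ∈ E.1) ∨
     (∃ (B : Coalition Agent) (δ : Formula Agent AP),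
        ψ = Formula.neg (Formula.C B δ) ∧
        ∃ (E : Coalition Agent) (ε : Formula Agent AP),
          Formula.neg (Formula.D E ε) ∈ Δ ∧ (∃ a, a ∈ A.1 ∧ a ∈ E.1) ∧
          ∃ a, a ∈ B.1 ∧ a ∈ E.1))

end Tableau

section Closure

variable {Agent AP : Type}

/-- The closure `cl(θ)`: smallest set containing `θ`, closed under α- and β-components,
and containing `¬ψ` whenever `¬D_A ψ` is in it. -/
inductive Closure (θ : Formula Agent AP) : Formula Agent AP → Prop where
  | base : Closure θ θ
  | alpha {χ ψ : Formula Agent AP} : Closure θ χ → AlphaComp χ ψ → Closure θ ψ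
  | beta {χ ψ : Formula Agent AP} : Closure θ χ → BetaComp χ ψ → Closure θ ψ
  | negD {A : Coalition Agent} {ψ : Formula Agent AP} :
      Closure θ (Formula.neg (.D A ψ)) → Closure θ (Formula.neg ψ)

/-- The extended closure `ecl(θ)`: smallest set containing `χ` and `¬χ`
for every `χ ∈ cl(θ)`. -/
def ecl (θ : Formula Agent AP) : Set (Formula Agent AP) :=
  {φ | ∃ χ, Closure θ χ ∧ (φ = χ ∨ φ = Formula.neg χ)}

/-- The length of a formula. -/
def Formula.length : Formula Agent AP → ℕ
  | .atom _ => 1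
  | .neg φ => φ.length + 1
  | .conj φ ψ => φ.length + ψ.length + 1
  | .D _ φ => φ.length + 1
  | .C _ φ => φ.length + 1

/-- The agents occurring in a formula. -/
def Formula.agents [DecidableEq Agent] : Formula Agent AP → Finset Agent
  | .atom _ => ∅
  | .neg φ => φ.agents
  | .conj φ ψ => φ.agents ∪ ψ.agents
  | .D A φ => A.1 ∪ φ.agents
  | .C A φ => A.1 ∪ φ.agents

end Closure

/-- The extended labeling `L⁺` of a CMAEM: `L⁺(s) = {φ | M,s ⊨ φ}`. -/
def extLabel {Agent AP : Type} (M : CMAEM Agent AP) (s : M.State) :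
    Set (Formula Agent AP) :=
  {φ | M.sat s φ}


section Statement16Aux

variable {Agent AP : Type}

lemma subf_self (χ : Formula Agent AP) : χ ∈ subf χ := by
  cases χ <;> simp [subf]

lemma subf_trans {χ ψ : Formula Agent AP} (h : ψ ∈ subf χ) : subf ψ ⊆ subf χ := by
  induction χ with
  | atom p =>
    simp only [subf, Set.mem_singleton_iff] at h
    subst h; exact subset_rfl
  | neg φ ih =>
    simp only [subf, Set.mem_insert_iff] at h
    rcases h with h | h
    · subst h; exact subset_rfl
    · exact (ih h).trans (Set.subset_insert _ _)
  | conj φ₁ φ₂ ih1 ih2 =>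
    simp only [subf, Set.mem_insert_iff, Set.mem_union] at h
    rcases h with h | h | h
    · subst h; exact subset_rfl
    · exact (ih1 h).trans ((Set.subset_union_left).trans (Set.subset_insert _ _))
    · exact (ih2 h).trans ((Set.subset_union_right).trans (Set.subset_insert _ _))
  | D A φ ih =>
    simp only [subf, Set.mem_insert_iff] at h
    rcases h with h | h
    · subst h; exact subset_rfl
    · exact (ih h).trans (Set.subset_insert _ _)
  | C A φ ih =>
    simp only [subf, Set.mem_insert_iff] at h
    rcases h with h | h
    · subst h; exact subset_rfl
    · exact (ih h).trans (Set.subset_insert _ _)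

lemma alphaComp_isAlpha {χ ψ : Formula Agent AP} (h : AlphaComp χ ψ) : IsAlpha χ := by
  cases h <;> trivial

/-- Members of a cut-saturated expansion are closed under α-components. -/
lemma CSE.alpha_closed {C1 C2 : CutCond Agent AP} {Γ Δ : Set (Formula Agent AP)}
    (hΔ : Δ ∈ CSE C1 C2 Γ) {χ ψ : Formula Agent AP} (hχ : χ ∈ Δ)
    (hc : AlphaComp χ ψ) : ψ ∈ Δ := by
  obtain ⟨F, _, hsat, hmem⟩ := hΔ
  have hstep := hsat _ (CSEStep.fe (FEStep.alpha hmem hχ (alphaComp_isAlpha hc)))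
  have : Δ ∈ (F \ {Δ}) ∪ {Δ' | Δ' = Δ ∪ {ψ | AlphaComp χ ψ} ∧ ¬ PatInc Δ'} := by
    rw [hstep]; exact hmem
  rcases this with h | h
  · exact absurd rfl h.2
  · have := h.1
    have hψ : ψ ∈ Δ ∪ {ψ | AlphaComp χ ψ} := Or.inr hc
    rw [← this] at hψ; exact hψ

/-- Members of a cut-saturated expansion are saturated under the `D`-cut rule. -/
lemma CSE.cutD_saturated {C1 C2 : CutCond Agent AP} {Γ Δ : Set (Formula Agent AP)}
    (hΔ : Δ ∈ CSE C1 C2 Γ) {ψ : Formula Agent AP} {A : Coalition Agent}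
    {φ : Formula Agent AP} (hψ : ψ ∈ Δ) (hsub : Formula.D A φ ∈ subf ψ)
    (hc : C1 (Formula.D A φ) ψ Δ) :
    Formula.D A φ ∈ Δ ∨ Formula.neg (Formula.D A φ) ∈ Δ := by
  obtain ⟨F, _, hsat, hmem⟩ := hΔ
  have hstep := hsat _ (CSEStep.cutD hmem hψ hsub hc)
  have : Δ ∈ (F \ {Δ}) ∪
      {Δ' | (Δ' = insert (Formula.D A φ) Δ ∨ Δ' = insert (Formula.neg (Formula.D A φ)) Δ) ∧
            ¬ PatInc Δ'} := by rw [hstep]; exact hmem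
  rcases this with h | h
  · exact absurd rfl h.2
  · rcases h.1 with h1 | h1
    · left; conv_lhs => rw [h1]
      exact Set.mem_insert _ _
    · right; conv_lhs => rw [h1]
      exact Set.mem_insert _ _

/-- Members of a cut-saturated expansion are saturated under the `C`-cut rule. -/
lemma CSE.cutC_saturated {C1 C2 : CutCond Agent AP} {Γ Δ : Set (Formula Agent AP)}
    (hΔ : Δ ∈ CSE C1 C2 Γ) {ψ : Formula Agent AP} {A : Coalition Agent}
    {φ : Formula Agent AP} (hψ : ψ ∈ Δ) (hsub : Formula.C A φ ∈ subf ψ)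
    (hc : C2 (Formula.C A φ) ψ Δ) :
    Formula.C A φ ∈ Δ ∨ Formula.neg (Formula.C A φ) ∈ Δ := by
  obtain ⟨F, _, hsat, hmem⟩ := hΔ
  have hstep := hsat _ (CSEStep.cutC hmem hψ hsub hc)
  have : Δ ∈ (F \ {Δ}) ∪
      {Δ' | (Δ' = insert (Formula.C A φ) Δ ∨ Δ' = insert (Formula.neg (Formula.C A φ)) Δ) ∧
            ¬ PatInc Δ'} := by rw [hstep]; exact hmem
  rcases this with h | h
  · exact absurd rfl h.2
  · rcases h.1 with h1 | h1
    · left; conv_lhs => rw [h1]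
      exact Set.mem_insert _ _
    · right; conv_lhs => rw [h1]
      exact Set.mem_insert _ _

/-- The key invariant predicate on formulas appearing during the expansion of the
successor prestate: every `D`-subformula with coalition inside `A` is decided in `Δ`
(or is one of the special `D_a C` formulas with the `C`-formula refuted in `Δ`), and
every `C`-subformula with coalition meeting `A` is decided in `Δ`. -/
def Qpred (Δ : Set (Formula Agent AP)) (A : Coalition Agent)
    (χ : Formula Agent AP) : Prop :=
  (∀ (B : Coalition Agent) (ψ : Formula Agent AP), B.1 ⊆ A.1 →
      Formula.D B ψ ∈ subf χ →
      Formula.D B ψ ∈ Δ ∨ Formula.neg (Formula.D B ψ) ∈ Δ ∨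
      ∃ (A₀ : Coalition Agent) (φ₀ : Formula Agent AP) (a : Agent),
        a ∈ A₀.1 ∧ a ∈ A.1 ∧ B = single a ∧ ψ = Formula.C A₀ φ₀ ∧
        Formula.neg (Formula.C A₀ φ₀) ∈ Δ) ∧
  (∀ (A₀ : Coalition Agent) (φ₀ : Formula Agent AP), (∃ a, a ∈ A₀.1 ∧ a ∈ A.1) →
      Formula.C A₀ φ₀ ∈ subf χ →
      Formula.C A₀ φ₀ ∈ Δ ∨ Formula.neg (Formula.C A₀ φ₀) ∈ Δ)

lemma Qpred.of_subf {Δ : Set (Formula Agent AP)} {A : Coalition Agent}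
    {χ ψ : Formula Agent AP} (h : Qpred Δ A χ) (hs : ψ ∈ subf χ) : Qpred Δ A ψ :=
  ⟨fun B σ hB hsub => h.1 B σ hB (subf_trans hs hsub),
   fun A₀ φ₀ hint hsub => h.2 A₀ φ₀ hint (subf_trans hs hsub)⟩

lemma Qpred.neg {Δ : Set (Formula Agent AP)} {A : Coalition Agent}
    {χ : Formula Agent AP} (h : Qpred Δ A χ) : Qpred Δ A (Formula.neg χ) := by
  constructor
  · intro B σ hB hsub
    simp only [subf, Set.mem_insert_iff] at hsub
    rcases hsub with hsub | hsub
    · exact absurd hsub (by simp)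
    · exact h.1 B σ hB hsub
  · intro A₀ φ₀ hint hsub
    simp only [subf, Set.mem_insert_iff] at hsub
    rcases hsub with hsub | hsub
    · exact absurd hsub (by simp)
    · exact h.2 A₀ φ₀ hint hsub

/-- `Qpred` propagates to the special formulas `D_{a} C_{A₀} φ₀`. -/
lemma Qpred.DaC {Δ : Set (Formula Agent AP)} {A A₀ : Coalition Agent}
    {φ₀ : Formula Agent AP}
    (hαΔ : ∀ χ ∈ Δ, ∀ ψ, AlphaComp χ ψ → ψ ∈ Δ)
    {a : Agent} (ha : a ∈ A₀.1)
    (h : Qpred Δ A (Formula.C A₀ φ₀)) :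
    Qpred Δ A (Formula.D (single a) (Formula.C A₀ φ₀)) := by
  constructor
  · intro B σ hB hsub
    simp only [subf, Set.mem_insert_iff] at hsub
    rcases hsub with hsub | hsub
    · -- the formula itself
      have hBa : B = single a := by
        injection hsub with h1 _
      have hσ : σ = Formula.C A₀ φ₀ := by
        injection hsub
      have haA : a ∈ A.1 := hB (by rw [hBa]; simp [single])
      rcases h.2 A₀ φ₀ ⟨a, ha, haA⟩ (subf_self _) with hC | hC
      · left
        rw [hBa, hσ]
        exact hαΔ _ hC _ (AlphaComp.cD A₀ φ₀ ha)
      · right; right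
        exact ⟨A₀, φ₀, a, ha, haA, hBa, hσ, hC⟩
    · exact h.1 B σ hB (by
        simp only [subf, Set.mem_insert_iff]
        exact hsub)
  · intro A₀' φ₀' hint hsub
    simp only [subf, Set.mem_insert_iff] at hsub
    rcases hsub with hsub | hsub
    · exact absurd hsub (by simp)
    · exact h.2 A₀' φ₀' hint (by
        simp only [subf, Set.mem_insert_iff]
        exact hsub)

lemma Qpred.alphaComp {Δ : Set (Formula Agent AP)} {A : Coalition Agent}
    (hαΔ : ∀ χ ∈ Δ, ∀ ψ, AlphaComp χ ψ → ψ ∈ Δ)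
    {χ ψc : Formula Agent AP} (h : Qpred Δ A χ) (hc : AlphaComp χ ψc) :
    Qpred Δ A ψc := by
  cases hc with
  | negneg φ =>
    exact h.of_subf (by simp [subf, subf_self])
  | conjL φ ψ => exact h.of_subf (by simp [subf, subf_self])
  | conjR φ ψ => exact h.of_subf (by simp [subf, subf_self])
  | dSelf A' φ => exact h
  | dComp A' φ => exact h.of_subf (by simp [subf, subf_self])
  | cComp A' φ => exact h.of_subf (by simp [subf, subf_self])
  | cD A₀ φ ha => exact Qpred.DaC hαΔ ha h

lemma Qpred.betaComp {Δ : Set (Formula Agent AP)} {A : Coalition Agent}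
    (hαΔ : ∀ χ ∈ Δ, ∀ ψ, AlphaComp χ ψ → ψ ∈ Δ)
    {χ ψc : Formula Agent AP} (h : Qpred Δ A χ) (hc : BetaComp χ ψc) :
    Qpred Δ A ψc := by
  cases hc with
  | nconjL φ ψ => exact (h.of_subf (by simp [subf, subf_self])).neg
  | nconjR φ ψ => exact (h.of_subf (by simp [subf, subf_self])).neg
  | ncComp A' φ => exact (h.of_subf (by simp [subf, subf_self])).neg
  | ncD A₀ φ ha =>
    exact (Qpred.DaC hαΔ ha (h.of_subf (by simp [subf, subf_self]))).neg

/-- Formulas decided in a cut-saturated `Δ` of the permitted host shapes satisfy `Qpred`. -/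
lemma Qpred.host {Δ : Set (Formula Agent AP)} {A : Coalition Agent} {φ : Formula Agent AP}
    (hcutD : ∀ host ∈ Δ, ∀ (B : Coalition Agent) (ψ : Formula Agent AP),
        Formula.D B ψ ∈ subf host → specC1 (Formula.D B ψ) host Δ →
        Formula.D B ψ ∈ Δ ∨ Formula.neg (Formula.D B ψ) ∈ Δ)
    (hcutC : ∀ host ∈ Δ, ∀ (A₀ : Coalition Agent) (φ₀ : Formula Agent AP),
        Formula.C A₀ φ₀ ∈ subf host → specC2 (Formula.C A₀ φ₀) host Δ →
        Formula.C A₀ φ₀ ∈ Δ ∨ Formula.neg (Formula.C A₀ φ₀) ∈ Δ)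
    (hT : Formula.neg (Formula.D A φ) ∈ Δ)
    {host : Formula Agent AP} (hhost : host ∈ Δ)
    (hshape : (∃ (B' : Coalition Agent) (δ : Formula Agent AP),
        (host = Formula.D B' δ ∨ host = Formula.neg (Formula.D B' δ)) ∧ B'.1 ⊆ A.1) ∨
      (∃ (B' : Coalition Agent) (δ : Formula Agent AP),
        host = Formula.neg (Formula.C B' δ) ∧ ∃ a, a ∈ B'.1 ∧ a ∈ A.1)) :
    Qpred Δ A host := by
  constructor
  · intro B ψ hB hsub
    have hc : specC1 (Formula.D B ψ) host Δ := by
      refine ⟨B, ψ, rfl, ?_⟩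
      rcases hshape with ⟨B', δ, heq, hsubA⟩ | ⟨B', δ, heq, hint⟩
      · exact Or.inl ⟨B', δ, heq, A, φ, hT, hB, hsubA⟩
      · exact Or.inr ⟨B', δ, heq, A, φ, hT, hB, hint⟩
    rcases hcutD host hhost B ψ hsub hc with h | h
    · exact Or.inl h
    · exact Or.inr (Or.inl h)
  · intro A₀ φ₀ hint₀ hsub
    apply hcutC host hhost A₀ φ₀ hsub
    refine ⟨A₀, φ₀, rfl, ?_⟩
    rcases hshape with ⟨B', δ, heq, hsubA⟩ | ⟨B', δ, heq, hintB⟩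
    · exact Or.inl ⟨B', δ, heq, A, φ, hT, hsubA, hint₀⟩
    · exact Or.inr ⟨B', δ, heq, A, φ, hT, hint₀, hintB⟩

/-- Every member of the prestate `DRset A φ Δ` satisfies `Qpred`. -/
lemma QGamma {Δ : Set (Formula Agent AP)} {A : Coalition Agent} {φ : Formula Agent AP}
    (hcutD : ∀ host ∈ Δ, ∀ (B : Coalition Agent) (ψ : Formula Agent AP),
        Formula.D B ψ ∈ subf host → specC1 (Formula.D B ψ) host Δ →
        Formula.D B ψ ∈ Δ ∨ Formula.neg (Formula.D B ψ) ∈ Δ)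
    (hcutC : ∀ host ∈ Δ, ∀ (A₀ : Coalition Agent) (φ₀ : Formula Agent AP),
        Formula.C A₀ φ₀ ∈ subf host → specC2 (Formula.C A₀ φ₀) host Δ →
        Formula.C A₀ φ₀ ∈ Δ ∨ Formula.neg (Formula.C A₀ φ₀) ∈ Δ)
    (hT : Formula.neg (Formula.D A φ) ∈ Δ) :
    ∀ χ ∈ DRset A φ Δ, Qpred Δ A χ := by
  intro χ hχ
  rcases hχ with ((h1 | h2) | h3) | h4
  · -- χ = ¬φ
    have h1' : χ = Formula.neg φ := h1
    subst h1'
    have hQ : Qpred Δ A (Formula.neg (Formula.D A φ)) :=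
      Qpred.host hcutD hcutC hT hT (Or.inl ⟨A, φ, Or.inr rfl, subset_rfl⟩)
    have hsub : φ ∈ subf (Formula.neg (Formula.D A φ)) := by
      simp only [subf, Set.mem_insert_iff]
      exact Or.inr (Or.inr (subf_self φ))
    exact (hQ.of_subf hsub).neg
  · obtain ⟨hΔ, A', ψ', heq, hsubA⟩ := h2
    exact Qpred.host hcutD hcutC hT hΔ (Or.inl ⟨A', ψ', Or.inl heq, hsubA⟩)
  · obtain ⟨hΔ, A', ψ', heq, hsubA, _⟩ := h3
    exact Qpred.host hcutD hcutC hT hΔ (Or.inl ⟨A', ψ', Or.inr heq, hsubA⟩)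
  · obtain ⟨hΔ, A', ψ', heq, hint⟩ := h4
    exact Qpred.host hcutD hcutC hT hΔ (Or.inr ⟨A', ψ', heq, hint⟩)

/-- The invariant is preserved by one `CSEStep`. -/
lemma inv_preserved {C1 C2 : CutCond Agent AP} {Δ : Set (Formula Agent AP)}
    {A : Coalition Agent} {Γ : Set (Formula Agent AP)}
    (hαΔ : ∀ χ ∈ Δ, ∀ ψ, AlphaComp χ ψ → ψ ∈ Δ)
    {F F' : Set (Set (Formula Agent AP))}
    (hstep : CSEStep C1 C2 F F')
    (hinv : ∀ Φ ∈ F, ¬ PatInc Φ ∧ Γ ⊆ Φ ∧ ∀ χ ∈ Φ, Qpred Δ A χ) :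
    ∀ Φ' ∈ F', ¬ PatInc Φ' ∧ Γ ⊆ Φ' ∧ ∀ χ ∈ Φ', Qpred Δ A χ := by
  cases hstep with
  | fe hfe =>
    cases hfe with
    | @alpha Φ χ hΦ hχ hα =>
      intro Φ' hΦ'
      rcases hΦ' with h | ⟨heq, hpat⟩
      · exact hinv Φ' h.1
      · obtain ⟨hp, hg, hq⟩ := hinv Φ hΦ
        subst heq
        refine ⟨hpat, hg.trans Set.subset_union_left, ?_⟩
        rintro χ' (hχ' | hχ')
        · exact hq χ' hχ'
        · exact Qpred.alphaComp hαΔ (hq χ hχ) hχ'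
    | @beta Φ χ hΦ hχ hβ hnone =>
      intro Φ' hΦ'
      rcases hΦ' with h | ⟨⟨ψc, hbc, heq⟩, hpat⟩
      · exact hinv Φ' h.1
      · obtain ⟨hp, hg, hq⟩ := hinv Φ hΦ
        subst heq
        refine ⟨hpat, hg.trans (Set.subset_insert _ _), ?_⟩
        rintro χ' (rfl | hχ')
        · exact Qpred.betaComp hαΔ (hq χ hχ) hbc
        · exact hq χ' hχ'
    | @ev Φ A₀ φ₀ hΦ hχ hnφ hother =>
      intro Φ' hΦ'
      rcases hΦ' with h | ⟨heq, hpat⟩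
      · exact hinv Φ' h
      · obtain ⟨hp, hg, hq⟩ := hinv Φ hΦ
        subst heq
        refine ⟨hpat, hg.trans (Set.subset_insert _ _), ?_⟩
        rintro χ' (rfl | hχ')
        · exact Qpred.betaComp hαΔ (hq _ hχ) (BetaComp.ncComp A₀ φ₀)
        · exact hq χ' hχ'
  | @cutD Φ ψh A₁ φ₁ hΦ hψ hsub hc =>
    intro Φ' hΦ'
    rcases hΦ' with h | ⟨heq, hpat⟩
    · exact hinv Φ' h.1
    · obtain ⟨hp, hg, hq⟩ := hinv Φ hΦ
      rcases heq with heq | heq <;> subst heq <;>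
        refine ⟨hpat, hg.trans (Set.subset_insert _ _), ?_⟩ <;>
        rintro χ' (rfl | hχ')
      · exact (hq ψh hψ).of_subf hsub
      · exact hq χ' hχ'
      · exact ((hq ψh hψ).of_subf hsub).neg
      · exact hq χ' hχ'
  | @cutC Φ ψh A₁ φ₁ hΦ hψ hsub hc =>
    intro Φ' hΦ'
    rcases hΦ' with h | ⟨heq, hpat⟩
    · exact hinv Φ' h.1
    · obtain ⟨hp, hg, hq⟩ := hinv Φ hΦ
      rcases heq with heq | heq <;> subst heq <;>
        refine ⟨hpat, hg.trans (Set.subset_insert _ _), ?_⟩ <;>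
        rintro χ' (rfl | hχ')
      · exact (hq ψh hψ).of_subf hsub
      · exact hq χ' hχ'
      · exact ((hq ψh hψ).of_subf hsub).neg
      · exact hq χ' hχ'

/-- The invariant holds at every member of a cut-saturated expansion. -/
lemma CSE.inv {C1 C2 : CutCond Agent AP} {Δ : Set (Formula Agent AP)}
    {A : Coalition Agent}
    (hαΔ : ∀ χ ∈ Δ, ∀ ψ, AlphaComp χ ψ → ψ ∈ Δ)
    {Γ Δ' : Set (Formula Agent AP)}
    (hQΓ : ∀ χ ∈ Γ, Qpred Δ A χ)
    (hΔ' : Δ' ∈ CSE C1 C2 Γ) :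
    ¬ PatInc Δ' ∧ Γ ⊆ Δ' ∧ ∀ χ ∈ Δ', Qpred Δ A χ := by
  obtain ⟨F, hreach, hsat, hmem⟩ := hΔ'
  have key : ∀ Φ ∈ F, ¬ PatInc Φ ∧ Γ ⊆ Φ ∧ ∀ χ ∈ Φ, Qpred Δ A χ := by
    clear hsat hmem
    induction hreach with
    | refl =>
      intro Φ hΦ
      obtain ⟨heq, hpat⟩ := hΦ
      subst heq
      exact ⟨hpat, subset_rfl, hQΓ⟩
    | tail hr hstep ih => exact inv_preserved hαΔ hstep ih
  exact key Δ' hmem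

end Statement16Aux

/-- with the specific restrictive cut conditions (C1), (C2): if
`Δ →^{¬D_A φ} Δ'` is an arrow of the final tableau `T^θ` and `D_B ψ ∈ Δ'` for some
nonempty `B ⊆ A`, then `D_B ψ ∈ Δ`. -/
theorem statement16 {Agent AP : Type} [Fintype Agent] [Countable AP]
    (hcard : 1 < Fintype.card Agent)
    (θ : Formula Agent AP)
    (S : Set (Set (Formula Agent AP))) (hfin : FinalTableau specC1 specC2 θ S)
    (Δ Δ' : Set (Formula Agent AP)) (hΔ : Δ ∈ S) (hΔ' : Δ' ∈ S)
    (A : Coalition Agent) (φ : Formula Agent AP)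
    (harr : InitArrow specC1 specC2 θ Δ A φ Δ')
    (B : Coalition Agent) (hB : B.1 ⊆ A.1) (ψ : Formula Agent AP)
    (h : Formula.D B ψ ∈ Δ') :
    Formula.D B ψ ∈ Δ := by
  classical
  obtain ⟨hstate, hT, hCSE⟩ := harr
  -- saturation properties of Δ
  obtain ⟨Γ₀, hpre, hΔCSE⟩ : ∃ Γ₀, IsPrestate specC1 specC2 θ Γ₀ ∧ Δ ∈ CSE specC1 specC2 Γ₀ := by
    cases hstate with
    | sr hpre hcse => exact ⟨_, hpre, hcse⟩
  have hαΔ : ∀ χ ∈ Δ, ∀ ψ, AlphaComp χ ψ → ψ ∈ Δ :=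
    fun χ hχ ψ' hc => CSE.alpha_closed hΔCSE hχ hc
  have hcutD : ∀ host ∈ Δ, ∀ (B' : Coalition Agent) (ψ' : Formula Agent AP),
      Formula.D B' ψ' ∈ subf host → specC1 (Formula.D B' ψ') host Δ →
      Formula.D B' ψ' ∈ Δ ∨ Formula.neg (Formula.D B' ψ') ∈ Δ :=
    fun host hhost B' ψ' hsub hc => CSE.cutD_saturated hΔCSE hhost hsub hc
  have hcutC : ∀ host ∈ Δ, ∀ (A₀ : Coalition Agent) (φ₀ : Formula Agent AP),
      Formula.C A₀ φ₀ ∈ subf host → specC2 (Formula.C A₀ φ₀) host Δ →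
      Formula.C A₀ φ₀ ∈ Δ ∨ Formula.neg (Formula.C A₀ φ₀) ∈ Δ :=
    fun host hhost A₀ φ₀ hsub hc => CSE.cutC_saturated hΔCSE hhost hsub hc
  -- invariant on Δ'
  obtain ⟨hpatΔ', hΓΔ', hQΔ'⟩ := CSE.inv hαΔ (QGamma hcutD hcutC hT) hCSE
  have hαΔ' : ∀ χ ∈ Δ', ∀ ψ, AlphaComp χ ψ → ψ ∈ Δ' :=
    fun χ hχ ψ' hc => CSE.alpha_closed hCSE hχ hc
  rcases (hQΔ' _ h).1 B ψ hB (subf_self _) with hD | hnD | ⟨A₀, φ₀, a, ha0, haA, hBa, hψC, hnC⟩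
  · exact hD
  · -- ¬D_B ψ ∈ Δ
    exfalso
    by_cases heq : Formula.neg (Formula.D B ψ) = Formula.neg (Formula.D A φ)
    · -- it is the trigger: B = A, ψ = φ
      have hBA : B = A := by
        injection heq with h1
        injection h1
      have hψφ : ψ = φ := by
        injection heq with h1
        injection h1
      subst hBA; subst hψφ
      have hnφ : Formula.neg ψ ∈ DRset B ψ Δ := Or.inl (Or.inl (Or.inl rfl))
      have hψ' : ψ ∈ Δ' := hαΔ' _ h _ (AlphaComp.dComp B ψ)
      exact hpatΔ' ⟨ψ, hψ', hΓΔ' hnφ⟩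
    · have hmem : Formula.neg (Formula.D B ψ) ∈ DRset A φ Δ :=
        Or.inl (Or.inr ⟨hnD, B, ψ, rfl, hB, heq⟩)
      exact hpatΔ' ⟨Formula.D B ψ, h, hΓΔ' hmem⟩
  · -- special case: D_B ψ = D_a (C_{A₀} φ₀) with ¬C_{A₀} φ₀ ∈ Δ
    exfalso
    have hmem : Formula.neg (Formula.C A₀ φ₀) ∈ DRset A φ Δ :=
      Or.inr ⟨hnC, A₀, φ₀, rfl, a, ha0, haA⟩
    have hC : Formula.C A₀ φ₀ ∈ Δ' := by
      have := hαΔ' _ h _ (AlphaComp.dComp B ψ)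
      rwa [hψC] at this
    exact hpatΔ' ⟨Formula.C A₀ φ₀, hC, hΓΔ' hmem⟩
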